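/- (Alice–Bob–Alice, substitutes: revealing early is optimal.) Let W, X_A, X_B be finitely-valued random variables with X_A and X_B independent conditioning on W, and let S be any deterministic function of X_A. Then Alice's total expected payment from revealing S(X_A) in stage 1 and the rest of X_A in stage 3 (after Bob reveals X_B) is at most her payment from revealing everything in stage 1: I(S(X_A); W) + I(X_A; W | (X_B, S(X_A))) ≤ I(X_A; W). -/

import Mathlib

open scoped BigOperators

noncomputable section

variable {Ω : Type*} [Fintype Ω]

/-- `μ` is a probability mass function on the finite sample space `Ω`. -/
def IsPmf (μ : Ω → ℝ) : Prop := (∀ ω, 0 ≤ μ ω) ∧ ∑ ω, μ ω = 1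

open Classical in
/-- Probability of the event `A` under the pmf `μ`. -/
def pr (μ : Ω → ℝ) (A : Ω → Prop) : ℝ := ∑ ω, if A ω then μ ω else 0

/-- Conditional probability of `A` given `B` (with the convention `x / 0 = 0`). -/
def cpr (μ : Ω → ℝ) (A B : Ω → Prop) : ℝ := pr μ (fun ω => A ω ∧ B ω) / pr μ B

open Classical in
/-- Mutual information between the random variables `X` and `Y`,
`I(X;Y) = Σ_{x,y} P[X=x,Y=y] log( P[X=x,Y=y] / (P[X=x]·P[Y=y]) )`. -/
def mi (μ : Ω → ℝ) {S T : Type*} (X : Ω → S) (Y : Ω → T) : ℝ :=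
  ∑ x ∈ Finset.univ.image X, ∑ y ∈ Finset.univ.image Y,
    pr μ (fun ω => X ω = x ∧ Y ω = y) *
      Real.log (pr μ (fun ω => X ω = x ∧ Y ω = y) /
        (pr μ (fun ω => X ω = x) * pr μ (fun ω => Y ω = y)))

open Classical in
/-- Mutual information between `X` and `Y` conditioned on the event `B`,
`I(X;Y|B) = Σ_{x,y} P[X=x,Y=y|B] log( P[X=x,Y=y|B] / (P[X=x|B]·P[Y=y|B]) )`. -/
def miOn (μ : Ω → ℝ) {S T : Type*} (X : Ω → S) (Y : Ω → T) (B : Ω → Prop) : ℝ :=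
  ∑ x ∈ Finset.univ.image X, ∑ y ∈ Finset.univ.image Y,
    cpr μ (fun ω => X ω = x ∧ Y ω = y) B *
      Real.log (cpr μ (fun ω => X ω = x ∧ Y ω = y) B /
        (cpr μ (fun ω => X ω = x) B * cpr μ (fun ω => Y ω = y) B))

open Classical in
/-- Conditional mutual information `I(X;Y|Z) = E_Z[ I(X;Y|Z=z) ]`. -/
def cmi (μ : Ω → ℝ) {S T U : Type*} (X : Ω → S) (Y : Ω → T) (Z : Ω → U) : ℝ :=
  ∑ z ∈ Finset.univ.image Z,
    pr μ (fun ω => Z ω = z) * miOn μ X Y (fun ω => Z ω = z)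

/-- `X` and `Y` are conditionally independent given `Z` under `μ`:
`P[X=x, Y=y | Z=z] = P[X=x | Z=z] · P[Y=y | Z=z]` for every `x`, `y`, `z`
(stated multiplicatively so that it also covers `P[Z=z] = 0`). -/
def CondIndep (μ : Ω → ℝ) {S T U : Type*} (X : Ω → S) (Y : Ω → T) (Z : Ω → U) : Prop :=
  ∀ (x : S) (y : T) (z : U),
    pr μ (fun ω => Z ω = z) * pr μ (fun ω => X ω = x ∧ Y ω = y ∧ Z ω = z)
      = pr μ (fun ω => X ω = x ∧ Z ω = z) * pr μ (fun ω => Y ω = y ∧ Z ω = z)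

/-! Since `S(X_A)` is a function of `X_A`, conditional independence of `X_A` and `X_B` given `W`
makes the chain rule collapse to the exact decomposition
`I(X_A;W) = I(S;W) + I(X_A;W | X_B,S) + I(X_A;X_B | S)`, which already holds for the log-ratios
at every point of positive mass. The last term is a conditional mutual information, hence
nonnegative by Gibbs' inequality `log t ≥ 1 - 1/t`. -/

open Classical Finset

section Probability

variable {μ : Ω → ℝ} {α β γ δ : Type*}

lemma pr_eq_sum_filter (μ : Ω → ℝ) (A : Ω → Prop) : pr μ A = ∑ ω with A ω, μ ω :=
  (sum_filter _ _).symm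

lemma pr_congr {A B : Ω → Prop} (h : ∀ ω, A ω ↔ B ω) : pr μ A = pr μ B := by
  rw [show A = B from funext fun ω => propext (h ω)]

lemma pr_nonneg (hμ : ∀ ω, 0 ≤ μ ω) (A : Ω → Prop) : 0 ≤ pr μ A := by
  rw [pr_eq_sum_filter]
  exact sum_nonneg fun ω _ => hμ ω

lemma le_pr (hμ : ∀ ω, 0 ≤ μ ω) {A : Ω → Prop} {ω : Ω} (hA : A ω) : μ ω ≤ pr μ A := by
  rw [pr_eq_sum_filter]
  exact single_le_sum (fun ω _ => hμ ω) (by simpa using hA)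

lemma pr_pos (hμ : ∀ ω, 0 ≤ μ ω) {A : Ω → Prop} {ω : Ω} (hA : A ω) (hω : 0 < μ ω) :
    0 < pr μ A :=
  hω.trans_le (le_pr hμ hA)

lemma sum_image_pr_eq_sum (μ : Ω → ℝ) (X : Ω → α) :
    ∑ x ∈ univ.image X, pr μ (fun ω => X ω = x) = ∑ ω, μ ω := by
  simp only [pr_eq_sum_filter]
  exact sum_fiberwise_of_maps_to (fun ω _ => mem_image_of_mem X (mem_univ ω)) μ

lemma sum_sum_pr_and_mul (μ : Ω → ℝ) (X : Ω → α) (Y : Ω → β) (F : α → β → ℝ) :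
    ∑ x ∈ univ.image X, ∑ y ∈ univ.image Y, pr μ (fun ω => X ω = x ∧ Y ω = y) * F x y
      = ∑ ω, μ ω * F (X ω) (Y ω) := by
  simp only [pr, sum_mul, ite_mul, zero_mul, ite_and]
  rw [sum_comm_cycle]
  simp [sum_ite_eq]

lemma sum_mul_log_nonneg (hμ : IsPmf μ) {f : Ω → ℝ} (hf : ∀ ω, 0 < μ ω → 0 < f ω)
    (h : ∑ ω, μ ω * (f ω)⁻¹ ≤ 1) : 0 ≤ ∑ ω, μ ω * Real.log (f ω) := by
  have hle : ∑ ω, μ ω * (1 - (f ω)⁻¹) ≤ ∑ ω, μ ω * Real.log (f ω) := by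
    refine sum_le_sum fun ω _ => ?_
    rcases (hμ.1 ω).eq_or_lt with h0 | hpos
    · simp [← h0]
    · exact mul_le_mul_of_nonneg_left (Real.one_sub_inv_le_log_of_pos (hf ω hpos)) hpos.le
  simp only [mul_sub, mul_one, sum_sub_distrib, hμ.2] at hle
  linarith

def pmi (μ : Ω → ℝ) (X : Ω → α) (Y : Ω → β) (x : α) (y : β) : ℝ :=
  Real.log (pr μ (fun ω => X ω = x ∧ Y ω = y) /
    (pr μ (fun ω => X ω = x) * pr μ (fun ω => Y ω = y)))

lemma mi_eq_sum_pmi (μ : Ω → ℝ) (X : Ω → α) (Y : Ω → β) :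
    mi μ X Y = ∑ ω, μ ω * pmi μ X Y (X ω) (Y ω) :=
  sum_sum_pr_and_mul μ X Y (pmi μ X Y)

lemma mi_nonneg (hμ : IsPmf μ) (X : Ω → α) (Y : Ω → β) : 0 ≤ mi μ X Y := by
  rw [mi_eq_sum_pmi]
  refine sum_mul_log_nonneg hμ (fun ω hω => ?_) ?_
  · have hp : ∀ A : Ω → Prop, A ω → 0 < pr μ A := fun A hA => pr_pos hμ.1 hA hω
    exact div_pos (hp _ ⟨rfl, rfl⟩) (mul_pos (hp _ rfl) (hp _ rfl))
  · rw [← sum_sum_pr_and_mul μ X Y fun x y =>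
      (pr μ (fun ω => X ω = x ∧ Y ω = y) / (pr μ (fun ω => X ω = x) * pr μ (fun ω => Y ω = y)))⁻¹]
    calc _ ≤ ∑ x ∈ univ.image X, ∑ y ∈ univ.image Y,
          pr μ (fun ω => X ω = x) * pr μ (fun ω => Y ω = y) := by
          refine sum_le_sum fun x _ => sum_le_sum fun y _ => ?_
          rcases eq_or_ne (pr μ (fun ω => X ω = x ∧ Y ω = y)) 0 with h0 | h0
          · simp [h0, mul_nonneg (pr_nonneg hμ.1 _) (pr_nonneg hμ.1 _)]
          · rw [inv_div, mul_div_cancel₀ _ h0]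
      _ = 1 := by rw [← sum_mul_sum, sum_image_pr_eq_sum, sum_image_pr_eq_sum, hμ.2, one_mul]

/-- `μ` conditioned on the event `B`; the zero function when `P[B] = 0`. -/
def condPmf (μ : Ω → ℝ) (B : Ω → Prop) (ω : Ω) : ℝ :=
  (if B ω then μ ω else 0) / pr μ B

lemma pr_condPmf (μ : Ω → ℝ) (A B : Ω → Prop) : pr (condPmf μ B) A = cpr μ A B := by
  simp only [pr, cpr, condPmf, sum_div]
  refine sum_congr rfl fun ω _ => ?_
  split_ifs <;> simp_all

lemma isPmf_condPmf (hμ : ∀ ω, 0 ≤ μ ω) {B : Ω → Prop} (hB : pr μ B ≠ 0) :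
    IsPmf (condPmf μ B) := by
  refine ⟨fun ω => div_nonneg ?_ (pr_nonneg hμ B), ?_⟩
  · split_ifs <;> simp [hμ ω]
  · simp only [condPmf, ← sum_div]
    exact div_self hB

lemma pr_mul_condPmf (hμ : ∀ ω, 0 ≤ μ ω) (B : Ω → Prop) (ω : Ω) :
    pr μ B * condPmf μ B ω = if B ω then μ ω else 0 := by
  rcases eq_or_ne (pr μ B) 0 with hB | hB
  · split_ifs with hω
    · simp [hB, le_antisymm (hB ▸ le_pr hμ hω) (hμ ω)]
    · simp [hB]
  · exact mul_div_cancel₀ _ hB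

lemma miOn_eq_mi_condPmf (μ : Ω → ℝ) (X : Ω → α) (Y : Ω → β) (B : Ω → Prop) :
    miOn μ X Y B = mi (condPmf μ B) X Y := by
  simp only [mi, miOn, pr_condPmf]

lemma cmi_eq_sum_pmi (hμ : ∀ ω, 0 ≤ μ ω) (X : Ω → α) (Y : Ω → β) (Z : Ω → γ) :
    cmi μ X Y Z = ∑ ω, μ ω * pmi (condPmf μ fun ω' => Z ω' = Z ω) X Y (X ω) (Y ω) := by
  simp only [cmi, miOn_eq_mi_condPmf, mi_eq_sum_pmi, mul_sum, ← mul_assoc, pr_mul_condPmf hμ,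
    ite_mul, zero_mul]
  rw [sum_comm]
  simp [sum_ite_eq]

lemma cmi_nonneg (hμ : IsPmf μ) (X : Ω → α) (Y : Ω → β) (Z : Ω → γ) : 0 ≤ cmi μ X Y Z := by
  refine sum_nonneg fun z _ => ?_
  rcases eq_or_ne (pr μ fun ω => Z ω = z) 0 with hz | hz
  · simp [hz]
  · rw [miOn_eq_mi_condPmf]
    exact mul_nonneg (pr_nonneg hμ.1 _) (mi_nonneg (isPmf_condPmf hμ.1 hz) X Y)

lemma pr_comp_and_eq_sum (μ : Ω → ℝ) (X : Ω → α) (f : α → δ) (v : δ) (A : Ω → Prop) :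
    pr μ (fun ω => f (X ω) = v ∧ A ω)
      = ∑ x ∈ univ.image X with f x = v, pr μ (fun ω => X ω = x ∧ A ω) := by
  simp only [pr_eq_sum_filter]
  rw [← sum_fiberwise_of_maps_to (g := X) (t := {x ∈ univ.image X | f x = v})
    fun ω hω => by simp_all]
  refine sum_congr rfl fun x hx => ?_
  rw [mem_filter] at hx
  congr 1
  ext ω
  simp only [mem_filter, mem_univ, true_and]
  constructor
  · rintro ⟨⟨-, hA⟩, rfl⟩; exact ⟨rfl, hA⟩
  · rintro ⟨rfl, hA⟩; exact ⟨⟨hx.2, hA⟩, rfl⟩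

lemma CondIndep.comp_left {X : Ω → α} {Y : Ω → β} {Z : Ω → γ} (h : CondIndep μ X Y Z)
    (f : α → δ) : CondIndep μ (fun ω => f (X ω)) Y Z := by
  intro v y z
  rw [pr_comp_and_eq_sum, pr_comp_and_eq_sum, mul_sum, sum_mul]
  exact sum_congr rfl fun x _ => h x y z

lemma CondIndep.pr_comp_and_mul_pr_and {X : Ω → α} {Y : Ω → β} {W : Ω → γ}
    (h : CondIndep μ X Y W) (f : α → δ) (x : α) (y : β) {w : γ}
    (hw : pr μ (fun ω => W ω = w) ≠ 0) :
    pr μ (fun ω => f (X ω) = f x ∧ W ω = w) * pr μ (fun ω => X ω = x ∧ Y ω = y ∧ W ω = w)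
      = pr μ (fun ω => X ω = x ∧ W ω = w)
        * pr μ (fun ω => f (X ω) = f x ∧ Y ω = y ∧ W ω = w) := by
  apply mul_left_cancel₀ hw
  linear_combination pr μ (fun ω => f (X ω) = f x ∧ W ω = w) * h x y w
    - pr μ (fun ω => X ω = x ∧ W ω = w) * h.comp_left f (f x) y w

lemma pmi_eq_add_of_condIndep (hμ : ∀ ω, 0 ≤ μ ω) {X : Ω → α} {Y : Ω → β} {W : Ω → γ}
    (h : CondIndep μ X Y W) (f : α → δ) {ω : Ω} (hω : 0 < μ ω) :
    pmi μ X W (X ω) (W ω)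
      = pmi μ (fun ω => f (X ω)) W (f (X ω)) (W ω)
        + pmi (condPmf μ fun ω' => (Y ω', f (X ω')) = (Y ω, f (X ω))) X W (X ω) (W ω)
        + pmi (condPmf μ fun ω' => f (X ω') = f (X ω)) X Y (X ω) (Y ω) := by
  have hp : ∀ A : Ω → Prop, A ω → 0 < pr μ A := fun A hA => pr_pos hμ hA hω
  set x := X ω
  set y := Y ω
  set w := W ω
  set v := f x
  simp only [pmi, pr_condPmf, cpr, Prod.mk.injEq]
  have hfx : ∀ ω', X ω' = x → f (X ω') = v := fun ω' h => h ▸ rfl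
  have e₁ : pr μ (fun ω' => (X ω' = x ∧ W ω' = w) ∧ Y ω' = y ∧ f (X ω') = v)
      = pr μ (fun ω' => X ω' = x ∧ Y ω' = y ∧ W ω' = w) :=
    pr_congr fun ω' => by have := hfx ω'; tauto
  have e₂ : pr μ (fun ω' => X ω' = x ∧ Y ω' = y ∧ f (X ω') = v)
      = pr μ (fun ω' => X ω' = x ∧ Y ω' = y) :=
    pr_congr fun ω' => by have := hfx ω'; tauto
  have e₃ : pr μ (fun ω' => W ω' = w ∧ Y ω' = y ∧ f (X ω') = v)
      = pr μ (fun ω' => f (X ω') = v ∧ Y ω' = y ∧ W ω' = w) :=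
    pr_congr fun ω' => by tauto
  have e₄ : pr μ (fun ω' => (X ω' = x ∧ Y ω' = y) ∧ f (X ω') = v)
      = pr μ (fun ω' => X ω' = x ∧ Y ω' = y) :=
    pr_congr fun ω' => by have := hfx ω'; tauto
  have e₅ : pr μ (fun ω' => X ω' = x ∧ f (X ω') = v) = pr μ (fun ω' => X ω' = x) :=
    pr_congr fun ω' => by have := hfx ω'; tauto
  rw [e₁, e₂, e₃, e₄, e₅]
  have hw := hp (fun ω' => W ω' = w) rfl
  have key := h.pr_comp_and_mul_pr_and f x y hw.ne'
  have hx := hp (fun ω' => X ω' = x) rfl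
  have hv := hp (fun ω' => f (X ω') = v) rfl
  have hvw := hp (fun ω' => f (X ω') = v ∧ W ω' = w) ⟨rfl, rfl⟩
  have hxw := hp (fun ω' => X ω' = x ∧ W ω' = w) ⟨rfl, rfl⟩
  have hxy := hp (fun ω' => X ω' = x ∧ Y ω' = y) ⟨rfl, rfl⟩
  have hyv := hp (fun ω' => Y ω' = y ∧ f (X ω') = v) ⟨rfl, rfl⟩
  have hxyw := hp (fun ω' => X ω' = x ∧ Y ω' = y ∧ W ω' = w) ⟨rfl, rfl, rfl⟩
  have hvyw := hp (fun ω' => f (X ω') = v ∧ Y ω' = y ∧ W ω' = w) ⟨rfl, rfl, rfl⟩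
  rw [← Real.log_mul (by positivity) (by positivity),
    ← Real.log_mul (by positivity) (by positivity)]
  congr 1
  field_simp
  linear_combination -key

lemma mi_eq_add_cmi_of_condIndep (hμ : ∀ ω, 0 ≤ μ ω) {X : Ω → α} {Y : Ω → β} {W : Ω → γ}
    (h : CondIndep μ X Y W) (f : α → δ) :
    mi μ X W = mi μ (fun ω => f (X ω)) W + cmi μ X W (fun ω => (Y ω, f (X ω)))
      + cmi μ X Y (fun ω => f (X ω)) := by
  simp only [mi_eq_sum_pmi, cmi_eq_sum_pmi hμ, ← sum_add_distrib]
  refine sum_congr rfl fun ω _ => ?_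
  rcases (hμ ω).eq_or_lt with h0 | hω
  · simp [← h0]
  · rw [pmi_eq_add_of_condIndep hμ h f hω]
    ring

end Probability

/-- Alice–Bob–Alice with substitutes: if `X_A` and `X_B` are independent conditioning
on `W` and `S'` is any deterministic function of `X_A`'s values, then Alice's total
expected payment from revealing `S'(X_A)` in stage 1 and the rest of `X_A` in stage 3
(after Bob reveals `X_B`) is at most her payment from revealing everything in stage 1:
`I(S'(X_A); W) + I(X_A; W | (X_B, S'(X_A))) ≤ I(X_A; W)`. -/
theorem aba_substitutes_reveal_early
    {SA SB T V : Type*} (μ : Ω → ℝ) (hμ : IsPmf μ)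
    (W : Ω → T) (XA : Ω → SA) (XB : Ω → SB)
    (h : CondIndep μ XA XB W) (S' : SA → V) :
    mi μ (fun ω => S' (XA ω)) W +
        cmi μ XA W (fun ω => (XB ω, S' (XA ω)))
      ≤ mi μ XA W := by
  rw [mi_eq_add_cmi_of_condIndep hμ.1 h S']
  linarith [cmi_nonneg hμ XA XB fun ω => S' (XA ω)]
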